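/- Let $E \subseteq \mathbb{R}$ be a nonempty compact set with $E^- = \min E$, $E^+ = \max E$, and let $\mathscr{H}(E)$ be the collection of connected components of $[E^-,E^+] \setminus E$ (the 'gaps' of $E$, each an open interval $I$ with endpoints $I^-, I^+ \in E$). Let $\vartheta : E \to \mathcal{K}_{\mathrm{fin}}(\overline\Omega)$ be continuous with respect to Hausdorff distance, monotone ($\vartheta(s_0) \subseteq \vartheta(s_1)$ for $s_0 \le s_1$ in $E$), and uniformly continuous with respect to $\mathsf{d}$ in the one-sided sense: for every $\varepsilon>0$ there is $\eta>0$ such that $\mathsf{d}(\vartheta(s_0),\vartheta(s_1)) \le \varepsilon$ whenever $s_0 \le s_1 \le s_0+\eta$ in $E$. Then the $\alpha$-total variation of $\vartheta$ over $E$ equals the sum over the gaps: $\mathrm{Var}_\alpha(\vartheta, E) = \sum_{I \in \mathscr{H}(E)} \alpha(\vartheta(I^-), \vartheta(I^+))$. -/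

import Mathlib

open Set MeasureTheory Metric Filter
open scoped ENNReal NNReal
open Classical

noncomputable section

abbrev Plane := EuclideanSpace ℝ (Fin 2)

/-- The set of connected components of `K`. -/
def comps {X : Type*} [TopologicalSpace X] (K : Set X) : Set (Set X) :=
  {C | ∃ x ∈ K, C = connectedComponentIn K x}

/-- `alphaN H K` is the number of connected components of `K` disjoint from `H`
if `H ⊆ K`, and `+∞` otherwise. -/
def alphaN {X : Type*} [TopologicalSpace X] (H K : Set X) : ℕ∞ :=
  if H ⊆ K then {C | C ∈ comps K ∧ Disjoint C H}.encard else ⊤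

/-- `ℝ≥0∞`-valued version of `alphaN`. -/
def alphaE {X : Type*} [TopologicalSpace X] (H K : Set X) : ℝ≥0∞ :=
  (alphaN H K : ℝ≥0∞)

/-- Total variation of the curve `K` induced by the cost `β`, over the set `E ⊆ ℝ`. -/
def VarOn {X : Type*} (β : Set X → Set X → ℝ≥0∞) (K : ℝ → Set X) (E : Set ℝ) : ℝ≥0∞ :=
  ⨆ (n : ℕ) (t : Fin (n+1) → ℝ) (_ : ∀ i, t i ∈ E) (_ : Monotone t),
    ∑ i : Fin n, β (K (t i.castSucc)) (K (t i.succ))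

/-- `ℕ∞`-valued total variation. -/
def VarOnN {X : Type*} (β : Set X → Set X → ℕ∞) (K : ℝ → Set X) (E : Set ℝ) : ℕ∞ :=
  ⨆ (n : ℕ) (t : Fin (n+1) → ℝ) (_ : ∀ i, t i ∈ E) (_ : Monotone t),
    ∑ i : Fin n, β (K (t i.castSucc)) (K (t i.succ))

/-- Left limit set `K(t-) = closure (⋃_{0 ≤ s < t} K(s))`. -/
def Kminus {X : Type*} [TopologicalSpace X] (K : ℝ → Set X) (t : ℝ) : Set X :=
  closure (⋃ s ∈ Set.Ico (0:ℝ) t, K s)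

/-- Right limit set `K(t+) = ⋂_{t < s ≤ T} K(s)`. -/
def Kplus {X : Type*} (K : ℝ → Set X) (T t : ℝ) : Set X :=
  ⋂ s ∈ Set.Ioc t T, K s


/-- The dissipation distance `𝖽`. -/
def dd (lam : ℝ≥0∞) (H K : Set Plane) : ℝ≥0∞ :=
  if H ⊆ K then μH[1] (K \ H) + lam * alphaE H K else ⊤

/-- The set of gaps (connected components of `[min E, max E] \ E`) of a compact `E ⊆ ℝ`. -/
def Gaps (E : Set ℝ) : Set (Set ℝ) :=
  {I | ∃ x ∈ Set.Icc (sInf E) (sSup E) \ E,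
    I = connectedComponentIn (Set.Icc (sInf E) (sSup E) \ E) x}

/-!
Choose `η` so that `𝖽`-steps of length at most `η` cost less than `λ`; since `α` is
integer-valued, it vanishes on them. Walking from `a` to `b` in `E` by steps of length `η`,
each step either moves between points of `E` at distance at most `η` (cost `0`), or jumps
across a gap `(w, v)`, and the triangle inequality for `α` bounds `α(ϑ(a), ϑ(b))` by the sum
of `α(ϑ(I⁻), ϑ(I⁺))` over the gaps `I` starting in `[a, b)`. Along a partition these sums
telescope, so the variation is at most the sum over all gaps. Conversely, the endpoints of
finitely many gaps, listed in increasing order, form a partition in which every one of these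
gaps appears as a pair of consecutive points.
-/

lemma alphaN_triangle {X : Type*} [TopologicalSpace X] {H M K : Set X}
    (hHM : H ⊆ M) (hMK : M ⊆ K) : alphaN H K ≤ alphaN H M + alphaN M K := by
  rw [alphaN, alphaN, alphaN, if_pos (hHM.trans hMK), if_pos hHM, if_pos hMK]
  -- a component of `K` meeting `M` is the `K`-component of a component of `M`
  let up : Set X → Set X := fun D => ⋃ x ∈ D, connectedComponentIn K x
  have hcover : {C | C ∈ comps K ∧ Disjoint C H} ⊆
      up '' {D | D ∈ comps M ∧ Disjoint D H} ∪ {C | C ∈ comps K ∧ Disjoint C M} := by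
    rintro _ ⟨⟨x, hxK, rfl⟩, hH⟩
    by_cases hM : Disjoint (connectedComponentIn K x) M
    · exact Or.inr ⟨⟨x, hxK, rfl⟩, hM⟩
    obtain ⟨y, hyx, hyM⟩ := not_disjoint_iff.1 hM
    have hsub : connectedComponentIn M y ⊆ connectedComponentIn K x := by
      rw [connectedComponentIn_eq hyx]
      exact connectedComponentIn_mono y hMK
    refine Or.inl ⟨_, ⟨⟨y, hyM, rfl⟩, hH.mono_left hsub⟩, ?_⟩
    calc up (connectedComponentIn M y)
        = ⋃ z ∈ connectedComponentIn M y, connectedComponentIn K x :=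
          iUnion₂_congr fun z hz => (connectedComponentIn_eq (hsub hz)).symm
      _ = connectedComponentIn K x := biUnion_const ⟨y, mem_connectedComponentIn hyM⟩ _
  calc _ ≤ _ := encard_le_encard hcover
    _ ≤ _ := encard_union_le _ _
    _ ≤ _ := add_le_add (encard_image_le _ _) le_rfl

lemma alphaE_triangle {X : Type*} [TopologicalSpace X] {H M K : Set X}
    (hHM : H ⊆ M) (hMK : M ⊆ K) : alphaE H K ≤ alphaE H M + alphaE M K := by
  rw [alphaE, alphaE, alphaE, ← ENat.toENNReal_add]
  exact ENat.toENNReal_le.2 (alphaN_triangle hHM hMK)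

lemma alphaE_eq_zero_of_dd_le {lam c : ℝ≥0∞} {H K : Set Plane} (h : dd lam H K ≤ c)
    (hc : c < lam) : alphaE H K = 0 := by
  have hHK : H ⊆ K := by
    by_contra hHK
    rw [dd, if_neg hHK, top_le_iff] at h
    exact not_top_lt (h ▸ hc)
  rw [dd, if_pos hHK] at h
  by_contra hne
  have hone : 1 ≤ alphaE H K := by
    rw [alphaE, ← ENat.toENNReal_one, ENat.toENNReal_le, Order.one_le_iff_ne_zero]
    exact fun h0 => hne (by rw [alphaE, h0, ENat.toENNReal_zero])
  have : lam ≤ c := calc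
    lam = lam * 1 := (mul_one lam).symm
    _ ≤ lam * alphaE H K := by gcongr
    _ ≤ c := le_add_self.trans h
  exact (hc.trans_le this).false

section Gaps

variable {E : Set ℝ}

lemma exists_Ioo_disjoint_of_le (hE : IsCompact E) {a b x : ℝ} (ha : a ∈ E) (hb : b ∈ E)
    (hax : a ≤ x) (hxb : x ≤ b) :
    ∃ w ∈ E, ∃ v ∈ E, a ≤ w ∧ w ≤ x ∧ x ≤ v ∧ v ≤ b ∧ Disjoint (Ioo w v) E := by
  have hleft := hE.inter_right (isClosed_Icc (a := a) (b := x))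
  have hright := hE.inter_right (isClosed_Icc (a := x) (b := b))
  have hw := hleft.sSup_mem ⟨a, ha, le_rfl, hax⟩
  have hv := hright.sInf_mem ⟨b, hb, hxb, le_rfl⟩
  refine ⟨_, hw.1, _, hv.1, hw.2.1, hw.2.2, hv.2.1, hv.2.2, disjoint_left.2 fun y hy hyE => ?_⟩
  rcases le_total y x with hyx | hxy
  · exact hy.1.not_ge (le_csSup hleft.bddAbove ⟨hyE, hw.2.1.trans hy.1.le, hyx⟩)
  · exact hy.2.not_ge (csInf_le hright.bddBelow ⟨hyE, hxy, hy.2.le.trans hv.2.2⟩)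

lemma Ioo_subset_Icc_diff_of_disjoint (hE : IsCompact E) {a b : ℝ} (ha : a ∈ E) (hb : b ∈ E)
    (hgap : Disjoint (Ioo a b) E) : Ioo a b ⊆ Icc (sInf E) (sSup E) \ E := fun _ hy =>
  ⟨⟨(csInf_le hE.bddBelow ha).trans hy.1.le, hy.2.le.trans (le_csSup hE.bddAbove hb)⟩,
    disjoint_left.1 hgap hy⟩

lemma connectedComponentIn_eq_Ioo_of_disjoint (hE : IsCompact E) {a b x : ℝ} (ha : a ∈ E)
    (hb : b ∈ E) (hgap : Disjoint (Ioo a b) E) (hx : x ∈ Ioo a b) :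
    connectedComponentIn (Icc (sInf E) (sSup E) \ E) x = Ioo a b := by
  have hsub := Ioo_subset_Icc_diff_of_disjoint hE ha hb hgap
  refine subset_antisymm (fun y hy => ?_) (isPreconnected_Ioo.subset_connectedComponentIn hx hsub)
  have hoc := (isPreconnected_connectedComponentIn (F := Icc (sInf E) (sSup E) \ E)
    (x := x)).ordConnected
  have hxC := mem_connectedComponentIn (hsub hx)
  have hnot : ∀ z ∈ E, z ∉ connectedComponentIn (Icc (sInf E) (sSup E) \ E) x :=
    fun z hz hzC => (connectedComponentIn_subset _ _ hzC).2 hz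
  refine ⟨lt_of_not_ge fun hya => hnot a ha ?_, lt_of_not_ge fun hby => hnot b hb ?_⟩
  · exact hoc.out hy hxC ⟨hya, hx.1.le⟩
  · exact hoc.out hxC hy ⟨hx.2.le, hby⟩

lemma Ioo_mem_Gaps (hE : IsCompact E) {a b : ℝ} (ha : a ∈ E) (hb : b ∈ E) (hab : a < b)
    (hgap : Disjoint (Ioo a b) E) : Ioo a b ∈ Gaps E := by
  obtain ⟨x, hx⟩ := nonempty_Ioo.2 hab
  exact ⟨x, Ioo_subset_Icc_diff_of_disjoint hE ha hb hgap hx,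
    (connectedComponentIn_eq_Ioo_of_disjoint hE ha hb hgap hx).symm⟩

lemma exists_Ioo_of_mem_Gaps (hE : IsCompact E) (hEne : E.Nonempty) {I : Set ℝ}
    (hI : I ∈ Gaps E) : ∃ a ∈ E, ∃ b ∈ E, a < b ∧ Disjoint (Ioo a b) E ∧ I = Ioo a b := by
  obtain ⟨x, ⟨hxE', hxE⟩, rfl⟩ := hI
  obtain ⟨a, ha, b, hb, -, hax, hxb, -, hgap⟩ :=
    exists_Ioo_disjoint_of_le hE (hE.sInf_mem hEne) (hE.sSup_mem hEne) hxE'.1 hxE'.2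
  have hx : x ∈ Ioo a b :=
    ⟨hax.lt_of_ne (by rintro rfl; exact hxE ha), hxb.lt_of_ne (by rintro rfl; exact hxE hb)⟩
  exact ⟨a, ha, b, hb, hx.1.trans hx.2, hgap,
    connectedComponentIn_eq_Ioo_of_disjoint hE ha hb hgap hx⟩

lemma disjoint_of_mem_Gaps {I J : Set ℝ} (hI : I ∈ Gaps E) (hJ : J ∈ Gaps E) (hIJ : I ≠ J) :
    Disjoint I J := by
  obtain ⟨x, -, rfl⟩ := hI
  obtain ⟨y, -, rfl⟩ := hJ
  refine disjoint_left.2 fun z hzx hzy => hIJ ?_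
  rw [connectedComponentIn_eq hzx, connectedComponentIn_eq hzy]

lemma sSup_le_sInf_of_mem_Gaps (hE : IsCompact E) (hEne : E.Nonempty) {I J : Set ℝ}
    (hI : I ∈ Gaps E) (hJ : J ∈ Gaps E) (hIJ : I ≠ J) (h : sInf I ≤ sInf J) :
    sSup I ≤ sInf J := by
  have hdisj := disjoint_of_mem_Gaps hI hJ hIJ
  obtain ⟨a, -, b, -, hab, -, rfl⟩ := exists_Ioo_of_mem_Gaps hE hEne hI
  obtain ⟨c, -, d, -, hcd, -, rfl⟩ := exists_Ioo_of_mem_Gaps hE hEne hJ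
  rw [csInf_Ioo hab, csInf_Ioo hcd] at h
  rw [csSup_Ioo hab, csInf_Ioo hcd]
  rw [Ioo_disjoint_Ioo, max_eq_right h] at hdisj
  exact (min_le_iff.1 hdisj).resolve_right hcd.not_ge

lemma sSup_le_sSup_of_mem_Gaps {I : Set ℝ} (hI : I ∈ Gaps E) : sSup I ≤ sSup E := by
  obtain ⟨x, hx, rfl⟩ := hI
  exact csSup_le ⟨x, mem_connectedComponentIn hx⟩
    fun y hy => (connectedComponentIn_subset _ _ hy).1.2

end Gaps

section IcoSum

variable {α : Type*} (ℓ : α → ℝ) (g : α → ℝ≥0∞)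

def icoSum (a b : ℝ) : ℝ≥0∞ := ∑' x, (ℓ ⁻¹' Ico a b).indicator g x

variable {ℓ g}

lemma icoSum_self (a : ℝ) : icoSum ℓ g a a = 0 := by
  simp [icoSum]

lemma icoSum_add_icoSum {a b c : ℝ} (hab : a ≤ b) (hbc : b ≤ c) :
    icoSum ℓ g a b + icoSum ℓ g b c = icoSum ℓ g a c := by
  rw [icoSum, icoSum, icoSum, ← ENNReal.tsum_add, ← Ico_union_Ico_eq_Ico hab hbc, preimage_union,
    indicator_union_of_disjoint (Ico_disjoint_Ico_same.preimage ℓ)]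

lemma le_icoSum {a b : ℝ} {x : α} (hx : ℓ x ∈ Ico a b) : g x ≤ icoSum ℓ g a b :=
  (indicator_of_mem (s := ℓ ⁻¹' Ico a b) hx g).symm.le.trans (ENNReal.le_tsum x)

lemma icoSum_le_tsum (a b : ℝ) : icoSum ℓ g a b ≤ ∑' x, g x :=
  ENNReal.tsum_le_tsum fun x => indicator_le_self _ _ x

lemma sum_icoSum_of_monotone {n : ℕ} {t : Fin (n + 1) → ℝ} (ht : Monotone t) :
    ∑ i : Fin n, icoSum ℓ g (t i.castSucc) (t i.succ) = icoSum ℓ g (t 0) (t (Fin.last n)) := by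
  induction n with
  | zero => simp [icoSum_self]
  | succ n ih =>
    have := ih (t := t ∘ Fin.castSucc) (ht.comp Fin.strictMono_castSucc.monotone)
    simp only [Function.comp_apply, ← Fin.succ_castSucc, Fin.castSucc_zero] at this
    rw [Fin.sum_univ_castSucc, this, icoSum_add_icoSum (ht (Fin.zero_le _))
      (ht (Fin.last n).castSucc_le_succ), Fin.succ_last]

end IcoSum

lemma sum_snoc_castSucc_succ {M : Type*} [AddCommMonoid M] {β : Type*} (φ : β → β → M) {n : ℕ}
    (t : Fin (n + 1) → β) (d : β) :
    ∑ i : Fin (n + 1), φ (Fin.snoc (α := fun _ => β) t d i.castSucc)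
        (Fin.snoc (α := fun _ => β) t d i.succ) =
      ∑ i : Fin n, φ (t i.castSucc) (t i.succ) + φ (t (Fin.last n)) d := by
  simp only [Fin.sum_univ_castSucc (n := n), Fin.snoc_castSucc, Fin.succ_castSucc,
    Fin.succ_last, Fin.snoc_last]

lemma monotone_snoc {β : Type*} [Preorder β] {n : ℕ} {t : Fin (n + 1) → β} (ht : Monotone t)
    {d : β} (hd : t (Fin.last n) ≤ d) : Monotone (Fin.snoc t d : Fin (n + 2) → β) := by
  simpa only [Fin.insertNth_last'] using Fin.insertNth_last_monotone ht d hd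

lemma forall_snoc_mem {β : Type*} {n : ℕ} {t : Fin n → β} {d : β} {S : Set β}
    (ht : ∀ i, t i ∈ S) (hd : d ∈ S) : ∀ i, (Fin.snoc t d : Fin (n + 1) → β) i ∈ S :=
  Fin.lastCases (by rwa [Fin.snoc_last]) fun i => by rw [Fin.snoc_castSucc]; exact ht i

section Variation

variable (φ : ℝ → ℝ → ℝ≥0∞) {E : Set ℝ}

lemma le_icoSum_of_Ioo_mem_Gaps (hE : IsCompact E) {w v : ℝ} (hw : w ∈ E) (hv : v ∈ E)
    (hwv : w < v) (hgap : Disjoint (Ioo w v) E) :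
    φ w v ≤ icoSum (fun I : Gaps E => sInf I.1) (fun I => φ (sInf I.1) (sSup I.1)) w v := by
  have hI : Ioo w v ∈ Gaps E := Ioo_mem_Gaps hE hw hv hwv hgap
  have := le_icoSum (ℓ := fun I : Gaps E => sInf I.1) (g := fun I => φ (sInf I.1) (sSup I.1))
    (a := w) (b := v) (x := ⟨Ioo w v, hI⟩) (by
      show sInf (Ioo w v) ∈ Ico w v
      rw [csInf_Ioo hwv]
      exact left_mem_Ico.2 hwv)
  simpa only [csInf_Ioo hwv, csSup_Ioo hwv] using this

variable {φ}

theorem le_icoSum_gaps (hE : IsCompact E)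
    (htri : ∀ a ∈ E, ∀ b ∈ E, ∀ c ∈ E, a ≤ b → b ≤ c → φ a c ≤ φ a b + φ b c)
    {η : ℝ} (hη : 0 < η) (hloc : ∀ a ∈ E, ∀ b ∈ E, a ≤ b → b ≤ a + η → φ a b = 0)
    {a b : ℝ} (ha : a ∈ E) (hb : b ∈ E) (hab : a ≤ b) :
    φ a b ≤ icoSum (fun I : Gaps E => sInf I.1) (fun I => φ (sInf I.1) (sSup I.1)) a b := by
  set G := icoSum (fun I : Gaps E => sInf I.1) (fun I => φ (sInf I.1) (sSup I.1))
  obtain ⟨n, hn⟩ := exists_nat_ge ((b - a) / η)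
  replace hn : b ≤ a + n * η := by rw [div_le_iff₀ hη] at hn; linarith
  induction n generalizing a with
  | zero =>
    rw [CharP.cast_eq_zero, zero_mul, add_zero] at hn
    simp [hloc a ha b hb hab (hn.trans (le_add_of_nonneg_right hη.le))]
  | succ n ih =>
    rcases le_or_gt b (a + η) with hnear | hfar
    · simp [hloc a ha b hb hab hnear]
    obtain ⟨w, hw, v, hv, haw, hwη, hηv, hvb, hgap⟩ :=
      exists_Ioo_disjoint_of_le hE ha hb (le_add_of_nonneg_right hη.le) hfar.le
    have hwv : φ w v ≤ G w v := by
      rcases (hwη.trans hηv).lt_or_eq with hlt | rfl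
      · exact le_icoSum_of_Ioo_mem_Gaps φ hE hw hv hlt hgap
      · simp [hloc w hw w hw le_rfl (le_add_of_nonneg_right hη.le)]
    have hvb' : φ v b ≤ G v b := ih hv hvb (by push_cast at hn; linarith)
    calc φ a b ≤ φ a w + (φ w v + φ v b) :=
          (htri a ha w hw b hb haw (hwη.trans (hηv.trans hvb))).trans
            (add_le_add_right (htri w hw v hv b hb (hwη.trans hηv) hvb) _)
      _ ≤ G a w + (G w v + G v b) := by
          rw [hloc a ha w hw haw hwη]
          gcongr
          exact zero_le
      _ = G a b := by
          rw [icoSum_add_icoSum (hwη.trans hηv) hvb,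
            icoSum_add_icoSum haw (hwη.trans (hηv.trans hvb))]

theorem exists_chain_ge_sum_gaps (hE : IsCompact E) (hEne : E.Nonempty) (s : Finset (Gaps E))
    {c : ℝ} (hc : c ∈ E) (hsc : ∀ I ∈ s, sSup I.1 ≤ c) :
    ∃ n, ∃ t : Fin (n + 1) → ℝ, (∀ i, t i ∈ E) ∧ Monotone t ∧ t (Fin.last n) = c ∧
      ∑ I ∈ s, φ (sInf I.1) (sSup I.1) ≤ ∑ i : Fin n, φ (t i.castSucc) (t i.succ) := by
  induction s using Finset.induction_on_max_value (fun I : Gaps E => sInf I.1) generalizing c with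
  | empty => exact ⟨0, fun _ => c, fun _ => hc, monotone_const, rfl, by simp⟩
  | insert J s hJs hmax ih =>
    obtain ⟨a, ha, b, hb, hab, -, hJ⟩ := exists_Ioo_of_mem_Gaps hE hEne J.2
    have hJa : sInf J.1 = a := hJ ▸ csInf_Ioo hab
    have hJb : sSup J.1 = b := hJ ▸ csSup_Ioo hab
    have hbc : b ≤ c := hJb ▸ hsc J (Finset.mem_insert_self J s)
    -- the gaps of `s` lie to the left of `J`, so a chain for them can end at `a`
    have hsa : ∀ I ∈ s, sSup I.1 ≤ a := fun I hI => hJa ▸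
      sSup_le_sInf_of_mem_Gaps hE hEne I.2 J.2 (fun h => hJs (Subtype.ext h ▸ hI)) (hmax I hI)
    obtain ⟨n, t, htE, ht, rfl, hsum⟩ := ih ha hsa
    refine ⟨n + 2, Fin.snoc (Fin.snoc t b) c, forall_snoc_mem (forall_snoc_mem htE hb) hc,
      monotone_snoc (monotone_snoc ht hab.le) (by rwa [Fin.snoc_last]), Fin.snoc_last _ _, ?_⟩
    rw [sum_snoc_castSucc_succ, sum_snoc_castSucc_succ, Finset.sum_insert hJs, hJa, hJb,
      Fin.snoc_last]
    calc φ (t (Fin.last n)) b + ∑ I ∈ s, φ (sInf I.1) (sSup I.1)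
        ≤ ∑ i : Fin n, φ (t i.castSucc) (t i.succ) + φ (t (Fin.last n)) b := by
          rw [add_comm]; gcongr
      _ ≤ _ := le_self_add

end Variation

theorem VarOn_eq_tsum_gaps {X : Type*} (β : Set X → Set X → ℝ≥0∞) (K : ℝ → Set X) {E : Set ℝ}
    (hE : IsCompact E) (hEne : E.Nonempty)
    (htri : ∀ a ∈ E, ∀ b ∈ E, ∀ c ∈ E, a ≤ b → b ≤ c →
      β (K a) (K c) ≤ β (K a) (K b) + β (K b) (K c))
    {η : ℝ} (hη : 0 < η) (hloc : ∀ a ∈ E, ∀ b ∈ E, a ≤ b → b ≤ a + η → β (K a) (K b) = 0) :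
    VarOn β K E = ∑' I : Gaps E, β (K (sInf I.1)) (K (sSup I.1)) := by
  rw [VarOn]
  apply le_antisymm
  · refine iSup_le fun n => iSup_le fun t => iSup_le fun htE => iSup_le fun ht => ?_
    calc ∑ i : Fin n, β (K (t i.castSucc)) (K (t i.succ))
        ≤ ∑ i : Fin n, icoSum (fun I : Gaps E => sInf I.1)
            (fun I => β (K (sInf I.1)) (K (sSup I.1))) (t i.castSucc) (t i.succ) :=
          Finset.sum_le_sum fun i _ =>
            le_icoSum_gaps hE htri hη hloc (htE _) (htE _) (ht i.castSucc_le_succ)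
      _ = icoSum _ _ (t 0) (t (Fin.last n)) := sum_icoSum_of_monotone ht
      _ ≤ _ := icoSum_le_tsum _ _
  · rw [ENNReal.tsum_eq_iSup_sum]
    refine iSup_le fun s => ?_
    obtain ⟨n, t, htE, ht, -, hsum⟩ := exists_chain_ge_sum_gaps (φ := fun a b => β (K a) (K b))
      hE hEne s (hE.sSup_mem hEne) fun I _ => sSup_le_sSup_of_mem_Gaps I.2
    exact hsum.trans (le_iSup₂_of_le n t (le_iSup₂_of_le htE ht le_rfl))

theorem stmt_15_general (lam : ℝ≥0∞) (hlam : 0 < lam)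
    (E : Set ℝ) (hE : IsCompact E) (hEne : E.Nonempty)
    (θ : ℝ → Set Plane)
    (hmono : ∀ s₀ ∈ E, ∀ s₁ ∈ E, s₀ ≤ s₁ → θ s₀ ⊆ θ s₁)
    (hdcont : ∀ ε > (0:ℝ), ∃ η > (0:ℝ), ∀ s₀ ∈ E, ∀ s₁ ∈ E,
      s₀ ≤ s₁ → s₁ ≤ s₀ + η → dd lam (θ s₀) (θ s₁) ≤ ENNReal.ofReal ε) :
    VarOn alphaE θ E = ∑' I : Gaps E, alphaE (θ (sInf I.1)) (θ (sSup I.1)) := by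
  obtain ⟨ε, -, hε, hεlam⟩ := ENNReal.lt_iff_exists_real_btwn.1 hlam
  obtain ⟨η, hη, hdη⟩ := hdcont ε (ENNReal.ofReal_pos.1 hε)
  exact VarOn_eq_tsum_gaps alphaE θ hE hEne
    (fun a ha b hb c hc hab hbc => alphaE_triangle (hmono a ha b hb hab) (hmono b hb c hc hbc))
    hη fun a ha b hb hab hbη => alphaE_eq_zero_of_dd_le (hdη a ha b hb hab hbη) hεlam

/-- The `α`-total variation of an admissible transition curve is concentrated on the
gaps of its (compact) domain. -/
theorem stmt_15 (Ω : Set Plane) (hΩ : Bornology.IsBounded Ω)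
    (lam : ℝ≥0∞) (hlam : 0 < lam) (hlam' : lam ≠ ⊤)
    (E : Set ℝ) (hE : IsCompact E) (hEne : E.Nonempty)
    (θ : ℝ → Set Plane)
    (hcomp : ∀ s ∈ E, IsCompact (θ s))
    (hsubΩ : ∀ s ∈ E, θ s ⊆ closure Ω)
    (hfinH : ∀ s ∈ E, μH[1] (θ s) < ⊤)
    (hfinC : ∀ s ∈ E, alphaN ∅ (θ s) < ⊤)
    (hmono : ∀ s₀ ∈ E, ∀ s₁ ∈ E, s₀ ≤ s₁ → θ s₀ ⊆ θ s₁)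
    (hcont : ∀ s ∈ E, Tendsto (fun r => hausdorffDist (θ r) (θ s)) (nhdsWithin s E) (nhds 0))
    (hdcont : ∀ ε > (0:ℝ), ∃ η > (0:ℝ), ∀ s₀ ∈ E, ∀ s₁ ∈ E,
      s₀ ≤ s₁ → s₁ ≤ s₀ + η → dd lam (θ s₀) (θ s₁) ≤ ENNReal.ofReal ε) :
    VarOn alphaE θ E = ∑' I : Gaps E, alphaE (θ (sInf I.1)) (θ (sSup I.1)) :=
  stmt_15_general lam hlam E hE hEne θ hmono hdcont
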